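/- arXiv:1505.06065 — 4 statements merged into one kernel-verified Lean document; each statement's English description precedes it below -/
import Mathlib

section
/- Let A be a complex unital Banach algebra and let (C(t))_{t∈ℝ} be a cosine function in A. If limsup_{t→0} ρ(C(t) − 1_A) < 2, then limsup_{t→0} ρ(C(t) − 1_A) = 0, where ρ(x) denotes the spectral radius of x. -/
open Filter Topology
open scoped ENNReal NNReal

/-- A cosine function in a unital Banach algebra: `C 0 = 1` and
`C (s+t) + C (s-t) = 2 * C s * C t` for all real `s, t`. -/
def IsCosineFunction {A : Type*} [NormedRing A] (C : ℝ → A) : Prop :=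
  C 0 = 1 ∧ ∀ s t : ℝ, C (s + t) + C (s - t) = 2 * C s * C t

/-!
Fix `r < 2` with `ρ(C t - 1) ≤ r` for small `t ≠ 0`. Since `C (n t) = T_n (C t)` for the
Chebyshev polynomials `T_n`, the spectral mapping theorem writes every point of `σ(C t)` as
`cos (K w)` with `cos (m w) ∈ σ(C (m t / K))`, so `|cos (m w) - 1| ≤ r` for all `m ≤ M`.
For a complex number `w` this forces `Im w = O(1 / M)` and keeps the angles `m Re w`, `m ≤ N`,
a fixed distance away from `π` modulo `2 π`. Approximate `Re w / 2 π` by a rational of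
denominator `d ≤ N` (Dirichlet): if `d` were large, one of these first multiples would come close
to `π`, so `d` divides `K = Q!` for a `Q` depending only on `r`, and `K Re w / 2 π` lies within
`K / N` of an integer. Hence `|cos (K w) - 1| = O(K / N)`, and letting `N → ∞` gives
`ρ(C t - 1) → 0`.
-/

open Polynomial Real

theorem Int.exists_natCast_mul_eq_add_of_isCoprime {p : ℤ} {d : ℕ} (hd : 0 < d)
    (hp : IsCoprime p d) (j : ℤ) : ∃ m : ℕ, m < d ∧ ∃ l : ℤ, m * p = d * l + j := by
  obtain ⟨a, b, hab⟩ := hp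
  obtain ⟨k, hk⟩ : (d : ℤ) ∣ a * j - a * j % d := Int.dvd_self_sub_of_emod_eq rfl
  have h0 : 0 ≤ a * j % d := Int.emod_nonneg _ (by omega)
  have hlt : a * j % d < d := Int.emod_lt_of_pos _ (by omega)
  refine ⟨(a * j % d).toNat, by omega, -(b * j) - k * p, ?_⟩
  rw [Int.toNat_of_nonneg h0]
  linear_combination j * hab - p * hk

theorem UnitAddCircle.coe_intCast (n : ℤ) : ((n : ℝ) : UnitAddCircle) = 0 := by
  rw [← zsmul_one, AddCircle.coe_zsmul, AddCircle.coe_period, smul_zero]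

theorem UnitAddCircle.exists_half_sub_le_norm_nsmul_ratCast (q : ℚ) (hq : 2 ≤ q.den) :
    ∃ m : ℕ, 0 < m ∧ m < q.den ∧ 1 / 2 - 1 / (2 * q.den) ≤ ‖m • ((q : ℝ) : UnitAddCircle)‖ := by
  set d := q.den
  set j := d / 2
  -- `q = num / d` with `num` a unit mod `d`, so some multiple `m * q` is `j / d` modulo `1`
  obtain ⟨m, hmd, l, hml⟩ := Int.exists_natCast_mul_eq_add_of_isCoprime (d := d) (by omega)
    (by rw [Int.isCoprime_iff_gcd_eq_one]; exact_mod_cast q.reduced) j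
  have hm0 : m ≠ 0 := by
    rintro rfl
    have := Int.le_of_dvd (by omega) (⟨-l, by simp at hml; linarith⟩ : (d : ℤ) ∣ j)
    omega
  refine ⟨m, Nat.pos_of_ne_zero hm0, hmd, ?_⟩
  have hdR : (0 : ℝ) < d := by exact_mod_cast q.pos
  have hmq : (m : ℝ) * q = l + j / d := by
    have hmlR : (m : ℝ) * q.num = d * l + j := by exact_mod_cast hml
    rw [Rat.cast_def]
    field_simp
    linear_combination (d : ℝ) * hmlR
  have hj : (d : ℝ) ≤ 2 * j + 1 := by exact_mod_cast (by omega : d ≤ 2 * j + 1)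
  have hj' : (2 * j : ℝ) ≤ d := by exact_mod_cast (by omega : 2 * j ≤ d)
  rw [← AddCircle.coe_nsmul, nsmul_eq_mul, hmq, AddCircle.coe_add, UnitAddCircle.coe_intCast,
    zero_add, (AddCircle.norm_coe_eq_abs_iff (p := (1 : ℝ)) one_ne_zero).2,
    abs_of_nonneg (by positivity), show (1 : ℝ) / 2 - 1 / (2 * d) = (d - 1) / 2 / d by field_simp]
  · gcongr
    linarith
  · rw [abs_of_nonneg (by positivity), abs_one, div_le_div_iff₀ hdR two_pos]
    linarith

theorem UnitAddCircle.norm_nsmul_le_of_forall_norm_nsmul_le {γ : ℝ} (hγ : 0 < γ) :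
    ∃ K : ℕ, 0 < K ∧ ∀ (x : UnitAddCircle) (N : ℕ), 0 < N →
      (∀ m : ℕ, 0 < m → m ≤ N → ‖m • x‖ ≤ 1 / 2 - γ) → ‖K • x‖ ≤ K / N := by
  set Q := ⌈3 / (2 * γ)⌉₊
  refine ⟨Q.factorial, Q.factorial_pos, fun x N hN hx => ?_⟩
  obtain ⟨α, rfl⟩ := QuotientAddGroup.mk_surjective x
  obtain ⟨q, hαq, hdN⟩ := Real.exists_rat_abs_sub_le_and_den_le α hN
  have hdR : (0 : ℝ) < q.den := by exact_mod_cast q.pos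
  have hNR : (0 : ℝ) < N := by exact_mod_cast hN
  have hdist (n : ℕ) :
      ‖n • (α : UnitAddCircle) - n • ((q : ℝ) : UnitAddCircle)‖ ≤ n * |α - q| := by
    rw [← smul_sub, ← AddCircle.coe_sub]
    exact norm_nsmul_le.trans (by gcongr; exact QuotientAddGroup.norm_mk_le_norm)
  by_cases hdQ : q.den ≤ Q
  · obtain ⟨c, hc⟩ := Nat.dvd_factorial q.pos hdQ
    have hKq : Q.factorial • ((q : ℝ) : UnitAddCircle) = 0 := by
      have hnum : (q.den : ℝ) * q = q.num := by rw [Rat.cast_def]; field_simp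
      rw [← AddCircle.coe_nsmul, nsmul_eq_mul, hc, Nat.cast_mul, mul_comm (q.den : ℝ), mul_assoc,
        hnum, ← Int.cast_natCast, ← Int.cast_mul, UnitAddCircle.coe_intCast]
    calc ‖Q.factorial • (α : UnitAddCircle)‖
        = ‖Q.factorial • (α : UnitAddCircle) - Q.factorial • ((q : ℝ) : UnitAddCircle)‖ := by
          rw [hKq, sub_zero]
      _ ≤ Q.factorial * (1 / ((N + 1) * q.den)) := (hdist _).trans (by gcongr)
      _ ≤ Q.factorial / N := by
          rw [mul_one_div]
          gcongr
          nlinarith [(by exact_mod_cast q.pos : (1 : ℝ) ≤ q.den)]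
  · exfalso
    have hQγ : 3 / (2 * γ) ≤ Q := Nat.le_ceil _
    have hQ : 0 < Q := Nat.ceil_pos.2 (by positivity)
    obtain ⟨m, hm0, hmd, hm⟩ := exists_half_sub_le_norm_nsmul_ratCast q (by omega)
    have hmx := hx m hm0 (hmd.le.trans hdN)
    have hmq : m * |α - q| ≤ 1 / (N + 1) := calc
      (m : ℝ) * |α - q| ≤ q.den * (1 / ((N + 1) * q.den)) := by gcongr
      _ = 1 / (N + 1) := by field_simp
    have h1 : 1 / ((N : ℝ) + 1) < 1 / q.den := by
      gcongr
      have : (q.den : ℝ) ≤ N := by exact_mod_cast hdN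
      linarith
    have h2 : 3 / (2 * (q.den : ℝ)) < γ := by
      rw [div_lt_iff₀ (by positivity)]
      rw [div_le_iff₀ (by positivity)] at hQγ
      have : (Q : ℝ) < q.den := by exact_mod_cast not_le.1 hdQ
      nlinarith
    have := (norm_sub_norm_le (m • ((q : ℝ) : UnitAddCircle)) (m • (α : UnitAddCircle))).trans
      ((norm_sub_rev _ _).le.trans (hdist m))
    have h3 : 1 / (2 * (q.den : ℝ)) + 1 / q.den = 3 / (2 * q.den) := by field_simp; ring
    linarith

theorem Real.one_sub_cos_two_pi_mul_le (x : ℝ) :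
    1 - cos (2 * π * x) ≤ 2 * π * ‖(x : UnitAddCircle)‖ := by
  have h := abs_cos_sub_cos_le (round x * (2 * π)) (2 * π * x)
  rw [cos_int_mul_two_pi, show round x * (2 * π) - 2 * π * x = -(2 * π * (x - round x)) by ring,
    abs_neg, abs_mul, abs_of_pos two_pi_pos] at h
  rw [UnitAddCircle.norm_eq]
  exact (le_abs_self _).trans h

theorem UnitAddCircle.norm_coe_le_of_neg_one_add_le_cos {x δ : ℝ}
    (h : -1 + δ ≤ cos (2 * π * x)) : ‖(x : UnitAddCircle)‖ ≤ 1 / 2 - δ / (2 * π) := by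
  -- `cos` is `1`-Lipschitz and equals `-1` at `2 π (n + 1 / 2)`
  have hfar (n : ℤ) : δ ≤ 2 * π * |x - (n + 1 / 2)| := by
    have := abs_cos_sub_cos_le (2 * π * x) (n * (2 * π) + π)
    rw [cos_int_mul_two_pi_add_pi, show 2 * π * x - (n * (2 * π) + π) =
      2 * π * (x - (n + 1 / 2)) by ring, abs_mul, abs_of_pos two_pi_pos] at this
    linarith [le_abs_self (cos (2 * π * x) - -1)]
  rw [UnitAddCircle.norm_eq, le_sub_comm, div_le_iff₀ two_pi_pos]
  obtain ⟨hlo, hhi⟩ := abs_le.1 (abs_sub_round x)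
  rcases le_total 0 (x - round x) with hx | hx
  · have := hfar (round x)
    rw [abs_of_nonpos (by linarith)] at this
    rw [abs_of_nonneg hx]
    linarith
  · have := hfar (round x - 1)
    push_cast at this
    rw [abs_of_nonneg (by linarith)] at this
    rw [abs_of_nonpos hx]
    linarith

theorem Complex.abs_im_le_norm_cos (z : ℂ) : |z.im| ≤ ‖cos z‖ := by
  have h := abs_norm_sub_norm_le (exp (-z * I)) (-exp (z * I))
  rw [norm_neg, sub_neg_eq_add, add_comm, ← two_cos, norm_mul, norm_exp, norm_exp] at h
  simp only [neg_mul, neg_re, mul_re, I_re, mul_zero, I_im, mul_one, zero_sub, neg_neg] at h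
  calc |z.im| ≤ |Real.sinh z.im| := by
        rw [Real.abs_sinh]; exact Real.self_le_sinh_iff.2 (abs_nonneg _)
    _ = |Real.exp z.im - Real.exp (-z.im)| / 2 := by rw [Real.sinh_eq, abs_div, abs_two]
    _ ≤ ‖cos z‖ := by norm_num at h; linarith

theorem Complex.norm_cos_sub_cos_re_le {z : ℂ} (hz : |z.im| ≤ 1) :
    ‖cos z - cos z.re‖ ≤ 2 * |z.im| := by
  have hsplit : 2 * (cos z - cos z.re) = exp (z.re * I) * ((Real.exp (-z.im) - 1 : ℝ) : ℂ) +
      exp ((-z.re : ℝ) * I) * ((Real.exp z.im - 1 : ℝ) : ℂ) := by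
    have h₁ : exp (z * I) = exp (z.re * I) * exp (-z.im) := by
      rw [← Complex.exp_add]; congr 1; nth_rw 1 [← re_add_im z]; ring_nf; rw [I_sq]; ring
    have h₂ : exp (-z * I) = exp (-z.re * I) * exp z.im := by
      rw [← Complex.exp_add]; congr 1; nth_rw 1 [← re_add_im z]; ring_nf; rw [I_sq]; ring
    rw [mul_sub, two_cos, two_cos, h₁, h₂]
    push_cast
    ring
  have h := norm_add_le (exp (z.re * I) * ((Real.exp (-z.im) - 1 : ℝ) : ℂ))
    (exp ((-z.re : ℝ) * I) * ((Real.exp z.im - 1 : ℝ) : ℂ))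
  rw [← hsplit, norm_mul, norm_mul, norm_mul, norm_exp_ofReal_mul_I, norm_exp_ofReal_mul_I,
    norm_real, norm_real, Real.norm_eq_abs, Real.norm_eq_abs, RCLike.norm_ofNat] at h
  have h₁ := Real.abs_exp_sub_one_le (x := -z.im) (by rwa [abs_neg])
  have h₂ := Real.abs_exp_sub_one_le hz
  rw [abs_neg] at h₁
  linarith

theorem Complex.norm_cos_ofReal_sub_one (x : ℝ) : ‖cos (x : ℂ) - 1‖ = 1 - Real.cos x := by
  rw [← ofReal_cos, ← ofReal_one, ← ofReal_sub, norm_real, Real.norm_eq_abs,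
    abs_of_nonpos (by linarith [Real.cos_le_one x]), neg_sub]

theorem Complex.norm_cos_nat_mul_sub_cos_re_le {w : ℂ} {M : ℕ} (hM : 0 < M)
    (hw : ‖cos (M * w) - 1‖ ≤ 2) {m : ℕ} (hm : 3 * m ≤ M) :
    ‖cos (m * w) - cos ((m * w.re : ℝ) : ℂ)‖ ≤ 6 * m / M := by
  have hMR : (0 : ℝ) < M := by exact_mod_cast hM
  have hmR : (3 * m : ℝ) ≤ M := by exact_mod_cast hm
  have him : M * |w.im| ≤ 3 := by
    have := (abs_im_le_norm_cos (M * w)).trans (norm_le_norm_sub_add _ 1)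
    simp only [mul_im, natCast_re, natCast_im, zero_mul, add_zero, abs_mul, Nat.abs_cast,
      norm_one] at this
    linarith
  have hmv : m * |w.im| ≤ 3 * m / M := by
    rw [le_div_iff₀ hMR]; nlinarith [abs_nonneg w.im]
  have h := norm_cos_sub_cos_re_le (z := m * w) (by
    simp only [mul_im, natCast_re, natCast_im, zero_mul, add_zero, abs_mul, Nat.abs_cast]
    exact hmv.trans ((div_le_one hMR).2 hmR))
  simp only [mul_im, natCast_re, natCast_im, zero_mul, add_zero, abs_mul, Nat.abs_cast, mul_re,
    sub_zero] at h
  rw [show 6 * (m : ℝ) / M = 2 * (3 * m / M) by ring]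
  linarith

theorem Complex.exists_norm_cos_nat_mul_sub_one_le {r : ℝ} (hr0 : 0 ≤ r) (hr : r < 2) :
    ∃ K : ℕ, 0 < K ∧ ∀ N M : ℕ, K ≤ N → 12 * N ≤ (2 - r) * M → ∀ w : ℂ,
      (∀ m : ℕ, 0 < m → m ≤ M → ‖cos (m * w) - 1‖ ≤ r) → ‖cos (K * w) - 1‖ ≤ 9 * K / N := by
  obtain ⟨K, hK, hKx⟩ := UnitAddCircle.norm_nsmul_le_of_forall_norm_nsmul_le
    (γ := (2 - r) / 2 / (2 * π)) (div_pos (by linarith) two_pi_pos)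
  refine ⟨K, hK, fun N M hKN hNM w hw => ?_⟩
  have hN : (0 : ℝ) < N := by exact_mod_cast hK.trans_le hKN
  have hNM' : (6 * N : ℝ) ≤ M := by nlinarith
  have hNM : 6 * N ≤ M := by exact_mod_cast hNM'
  have hM : 0 < M := by omega
  have hclose (m : ℕ) (hmN : m ≤ N) := Complex.norm_cos_nat_mul_sub_cos_re_le hM
    ((hw M hM le_rfl).trans (by linarith)) (m := m) (by omega)
  set α := w.re / (2 * π)
  have hα (m : ℕ) : 2 * π * (m * α) = m * w.re := by simp only [α]; field_simp
  have hsmall (m : ℕ) (hm0 : 0 < m) (hmN : m ≤ N) :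
      ‖m • (α : UnitAddCircle)‖ ≤ 1 / 2 - (2 - r) / 2 / (2 * π) := by
    rw [← AddCircle.coe_nsmul, nsmul_eq_mul]
    apply UnitAddCircle.norm_coe_le_of_neg_one_add_le_cos
    have h := norm_sub_le_norm_sub_add_norm_sub (cos ((m * w.re : ℝ) : ℂ)) (cos (m * w)) 1
    rw [Complex.norm_cos_ofReal_sub_one, norm_sub_rev] at h
    have hmM : 6 * (m : ℝ) / M ≤ (2 - r) / 2 := by
      have : (m : ℝ) ≤ N := by exact_mod_cast hmN
      rw [div_le_iff₀ (by positivity)]; nlinarith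
    rw [hα]
    linarith [hclose m hmN, hw m hm0 (by omega)]
  have hKα := hKx α N (by omega) hsmall
  rw [← AddCircle.coe_nsmul, nsmul_eq_mul] at hKα
  have hcos := Real.one_sub_cos_two_pi_mul_le (K * α)
  rw [hα] at hcos
  have hKM : 6 * (K : ℝ) / M ≤ K / N := by
    rw [div_le_div_iff₀ (by positivity) hN]
    nlinarith [mul_le_mul_of_nonneg_left hNM' (Nat.cast_nonneg (α := ℝ) K)]
  have hπ : 2 * π * (K / N) ≤ 8 * (K / N) := by gcongr; linarith [pi_le_four]
  calc ‖cos (K * w) - 1‖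
      ≤ ‖cos (K * w) - cos ((K * w.re : ℝ) : ℂ)‖ + ‖cos ((K * w.re : ℝ) : ℂ) - 1‖ :=
        norm_sub_le_norm_sub_add_norm_sub _ _ _
    _ ≤ 6 * K / M + 2 * π * (K / N) := by
        rw [Complex.norm_cos_ofReal_sub_one]
        gcongr
        · exact hclose K hKN
        · exact hcos.trans (mul_le_mul_of_nonneg_left hKα two_pi_pos.le)
    _ ≤ 9 * K / N := by linarith [show 9 * (K : ℝ) / N = K / N + 8 * (K / N) by ring]

theorem IsCosineFunction.natCast_mul {R A : Type*} [CommRing R] [NormedRing A] [Algebra R A]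
    {C : ℝ → A} (hC : IsCosineFunction C) (t : ℝ) (n : ℕ) :
    C (n * t) = aeval (C t) (Chebyshev.T R n) := by
  induction n using Nat.twoStepInduction with
  | zero => simpa using hC.1
  | one => simp
  | more n ih₀ ih₁ =>
    have h := hC.2 ((n + 1 : ℕ) * t) t
    rw [show ((n + 1 : ℕ) : ℝ) * t + t = (n + 2 : ℕ) * t by push_cast; ring,
      show ((n + 1 : ℕ) : ℝ) * t - t = n * t by push_cast; ring, ← eq_sub_iff_add_eq] at h
    rw [h, ih₀, ih₁, show ((n + 2 : ℕ) : ℤ) = n + 2 by push_cast; ring, Chebyshev.T_add_two,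
      mul_assoc (2 : R[X]), X_mul]
    simp [mul_assoc, map_ofNat]

theorem IsCosineFunction.exists_cos_of_mem_spectrum {A : Type*} [NormedRing A] [Algebra ℂ A]
    {C : ℝ → A} (hC : IsCosineFunction C) (s : ℝ) {K : ℕ} (hK : 0 < K) {z : ℂ}
    (hz : z ∈ spectrum ℂ (C (K * s))) :
    ∃ w : ℂ, Complex.cos (K * w) = z ∧ ∀ m : ℕ, Complex.cos (m * w) ∈ spectrum ℂ (C (m * s)) := by
  rw [hC.natCast_mul (R := ℂ), spectrum.map_polynomial_aeval_of_degree_pos _ _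
    (by rw [Chebyshev.degree_T]; exact_mod_cast hK)] at hz
  obtain ⟨_, hw, rfl⟩ := hz
  obtain ⟨w, rfl⟩ := Complex.cos_surjective ‹ℂ›
  refine ⟨w, by simp, fun m => ?_⟩
  rw [hC.natCast_mul (R := ℂ)]
  simpa using spectrum.subset_polynomial_aeval _ (Chebyshev.T ℂ m) ⟨Complex.cos w, hw, rfl⟩

theorem spectralRadius_sub_one_le_iff {𝕜 A : Type*} [NormedField 𝕜] [Ring A] [Algebra 𝕜 A]
    {a : A} {r : ℝ≥0} : spectralRadius 𝕜 (a - 1) ≤ r ↔ ∀ z ∈ spectrum 𝕜 a, ‖z - 1‖ ≤ r := by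
  rw [spectralRadius, ← map_one (algebraMap 𝕜 A), ← spectrum.sub_singleton_eq, Set.sub_singleton,
    iSup₂_le_iff, Set.forall_mem_image]
  simp [← NNReal.coe_le_coe]

theorem tendsto_const_mul_nhdsNE_zero {𝕜 : Type*} [NormedDivisionRing 𝕜] {c : 𝕜} (hc : c ≠ 0) :
    Tendsto (c * ·) (𝓝[≠] 0) (𝓝[≠] 0) :=
  tendsto_nhdsWithin_of_tendsto_nhds_of_eventually_within _
    (((continuous_const_mul c).tendsto' 0 0 (mul_zero c)).mono_left nhdsWithin_le_nhds)
    (eventually_nhdsWithin_of_forall fun _ ht => mul_ne_zero hc ht)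

theorem IsCosineFunction.tendsto_spectralRadius_sub_one {A : Type*} [NormedRing A] [Algebra ℂ A]
    {C : ℝ → A} (hC : IsCosineFunction C) {r : ℝ≥0} (hr : r < 2)
    (h : ∀ᶠ t in 𝓝[≠] (0 : ℝ), spectralRadius ℂ (C t - 1) ≤ r) :
    Tendsto (fun t => spectralRadius ℂ (C t - 1)) (𝓝[≠] 0) (𝓝 0) := by
  have hr' : (0 : ℝ) < 2 - r := sub_pos.2 (by exact_mod_cast hr)
  obtain ⟨K, hK, hKw⟩ := Complex.exists_norm_cos_nat_mul_sub_one_le r.coe_nonneg (by linarith)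
  refine ENNReal.tendsto_nhds_zero.2 fun ε hε => ?_
  obtain ⟨ε', hε'0, hε'⟩ := ENNReal.lt_iff_exists_nnreal_btwn.1 hε
  obtain ⟨N, hKN, hNε⟩ : ∃ N : ℕ, K ≤ N ∧ 9 * K / N ≤ (ε' : ℝ) := by
    obtain ⟨N, hN⟩ := exists_nat_ge (9 * K / ε' : ℝ)
    refine ⟨max K N, le_max_left _ _, ?_⟩
    have hpos : (0 : ℝ) < (max K N : ℕ) := by exact_mod_cast hK.trans_le (le_max_left _ _)
    rw [div_le_iff₀ hpos, ← div_le_iff₀' (by exact_mod_cast hε'0)]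
    exact hN.trans (by exact_mod_cast le_max_right _ _)
  obtain ⟨M, hM⟩ : ∃ M : ℕ, 12 * N ≤ (2 - r) * (M : ℝ) := by
    obtain ⟨M, hM⟩ := exists_nat_ge (12 * N / (2 - r : ℝ))
    exact ⟨M, (div_le_iff₀' hr').1 hM⟩
  have hP : ∀ m ∈ Finset.Icc 1 M,
      ∀ᶠ t in 𝓝[≠] (0 : ℝ), spectralRadius ℂ (C (m * (t / K)) - 1) ≤ r := by
    intro m hm
    have hmK : (m / K : ℝ) ≠ 0 := div_ne_zero
      (Nat.cast_ne_zero.2 (Nat.one_le_iff_ne_zero.1 (Finset.mem_Icc.1 hm).1))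
      (Nat.cast_ne_zero.2 hK.ne')
    filter_upwards [(tendsto_const_mul_nhdsNE_zero hmK).eventually h] with t ht
    rwa [div_mul_eq_mul_div, mul_div_assoc] at ht
  filter_upwards [(eventually_all_finset _).2 hP] with t ht
  refine le_trans (spectralRadius_sub_one_le_iff.2 fun z hz => ?_) hε'.le
  rw [show t = K * (t / K) by field_simp] at hz
  obtain ⟨w, rfl, hw⟩ := hC.exists_cos_of_mem_spectrum _ hK hz
  exact (hKw N M hKN hM w fun m hm hmM => spectralRadius_sub_one_le_iff.1
    (ht m (Finset.mem_Icc.2 ⟨hm, hmM⟩)) _ (hw m)).trans hNε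

theorem zero_two_law_spectral_radius_general {A : Type*} [NormedRing A] [NormedAlgebra ℂ A]
    (C : ℝ → A) (hC : IsCosineFunction C)
    (h : Filter.limsup (fun t : ℝ => spectralRadius ℂ (C t - 1)) (𝓝[≠] 0) < 2) :
    Filter.limsup (fun t : ℝ => spectralRadius ℂ (C t - 1)) (𝓝[≠] 0) = 0 := by
  obtain ⟨c, hc, hc2⟩ := exists_between h
  lift c to ℝ≥0 using ne_top_of_lt hc2
  exact (hC.tendsto_spectralRadius_sub_one (by exact_mod_cast hc2)
    ((eventually_lt_of_limsup_lt hc).mono fun _ => le_of_lt)).limsup_eq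

theorem zero_two_law_spectral_radius {A : Type*} [NormedRing A] [NormedAlgebra ℂ A]
    [CompleteSpace A] (C : ℝ → A) (hC : IsCosineFunction C)
    (h : Filter.limsup (fun t : ℝ => spectralRadius ℂ (C t - 1)) (𝓝[≠] 0) < 2) :
    Filter.limsup (fun t : ℝ => spectralRadius ℂ (C t - 1)) (𝓝[≠] 0) = 0 :=
  zero_two_law_spectral_radius_general C hC h
end

section
/- Let A be a complex unital Banach algebra and let (C(t))_{t∈ℝ} be a cosine function in A. Fix t ∈ ℝ and assume that ‖C(t) − 1_A‖ ≤ 2 and that ρ(C(t/2) − 1_A) < 1, where ρ denotes the spectral radius. Then C(t/2) = √(1_A − (1_A − C(t))/2), where the square root is given by the binomial series. -/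
/-!
By the doubling formula `C t = 2 C(t/2)² - 1`, `y := C (t/2)` is a square root of `1 - x` with
`x := (1 - C t)/2`, `‖x‖ ≤ 1`. The binomial series `s := √(1 - x)` is another one, commuting with
`y`, and `‖s - 1‖ ≤ 1` because `∑_{n ≥ 1} |binom(1/2, n)| = 1` (the partial sums telescope).
From `(s - y)(s + y) = 0` we get `s - y = (s - y) w` with `w = -((s - 1) + (y - 1))/2`.
Gelfand's formula gives `‖(y - 1)^k‖ ≤ K r^k` for some `r < 1`, so by the binomial theorem
`‖w^n‖ = O(((1 + r)/2)^n) → 0`, and therefore `s = y`.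
-/

open Filter Topology
open scoped ENNReal NNReal

/-- The generalized binomial coefficient `binom (1/2) n`. -/
noncomputable def binomHalf (n : ℕ) : ℝ :=
  (∏ k ∈ Finset.range n, ((1 : ℝ) / 2 - k)) / n.factorial

/-- The square root `√(1 - x)` defined by the binomial series
`∑ binom (1/2) n • (-x)^n`. -/
noncomputable def sqrtOneSub {A : Type*} [NormedRing A] [NormedAlgebra ℂ A]
    [CompleteSpace A] (x : A) : A :=
  ∑' n : ℕ, binomHalf n • (-x) ^ n

open Finset Asymptotics

open Polynomial in
lemma binomHalf_eq_choose (n : ℕ) : binomHalf n = Ring.choose (1 / 2 : ℝ) n := by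
  rw [Ring.choose_eq_smul, ← aeval_eq_smeval, ← eval_map_algebraMap, descPochhammer_map,
    descPochhammer_eval_eq_prod_range, binomHalf, smul_eq_mul, div_eq_inv_mul]

lemma sum_antidiagonal_binomHalf_mul (n : ℕ) :
    ∑ ij ∈ antidiagonal n, binomHalf ij.1 * binomHalf ij.2 = (Nat.choose 1 n : ℝ) := by
  simp only [binomHalf_eq_choose]
  rw [← Ring.add_choose_eq n (Commute.all _ _), add_halves, ← Nat.cast_one, Ring.choose_natCast]

lemma succ_mul_binomHalf_succ (n : ℕ) :
    (n + 1 : ℝ) * binomHalf (n + 1) = (1 / 2 - n) * binomHalf n := by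
  have hfac : (n.factorial : ℝ) ≠ 0 := Nat.cast_ne_zero.mpr n.factorial_ne_zero
  simp only [binomHalf, prod_range_succ, Nat.factorial_succ, Nat.cast_mul, Nat.cast_add,
    Nat.cast_one]
  field_simp

lemma sum_range_abs_binomHalf_succ (N : ℕ) :
    ∑ n ∈ range N, |binomHalf (n + 1)| = 1 - 2 * (N + 1) * |binomHalf (N + 1)| := by
  induction N with
  | zero => norm_num [binomHalf]
  | succ N ih =>
    have hrec := congrArg abs (succ_mul_binomHalf_succ (N + 1))
    rw [abs_mul, abs_mul, abs_of_pos (show (0 : ℝ) < (N + 1 : ℕ) + 1 by positivity),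
      abs_of_neg (show (1 / 2 : ℝ) - (N + 1 : ℕ) < 0 by push_cast; linarith)] at hrec
    rw [sum_range_succ, ih]
    push_cast at hrec ⊢
    linarith

lemma sum_range_abs_binomHalf_succ_le_one (N : ℕ) : ∑ n ∈ range N, |binomHalf (n + 1)| ≤ 1 := by
  rw [sum_range_abs_binomHalf_succ]
  have : 0 ≤ 2 * (N + 1 : ℝ) * |binomHalf (N + 1)| := by positivity
  linarith

lemma summable_abs_binomHalf_succ : Summable fun n ↦ |binomHalf (n + 1)| :=
  summable_of_sum_range_le (fun _ ↦ abs_nonneg _) sum_range_abs_binomHalf_succ_le_one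

lemma tsum_abs_binomHalf_succ_le_one : ∑' n, |binomHalf (n + 1)| ≤ 1 :=
  Real.tsum_le_of_sum_range_le (fun _ ↦ abs_nonneg _) sum_range_abs_binomHalf_succ_le_one

lemma norm_binomHalf_succ_smul_pow_le {A : Type*} [NormedRing A] [NormedAlgebra ℝ A] {x : A}
    (hx : ‖x‖ ≤ 1) (n : ℕ) : ‖binomHalf (n + 1) • (-x) ^ (n + 1)‖ ≤ |binomHalf (n + 1)| := by
  rw [norm_smul, Real.norm_eq_abs]
  refine mul_le_of_le_one_right (abs_nonneg _) ?_
  exact (norm_pow_le' _ n.succ_pos).trans (pow_le_one₀ (norm_nonneg _) (by rwa [norm_neg]))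

lemma summable_norm_binomHalf_smul_pow {A : Type*} [NormedRing A] [NormedAlgebra ℝ A] {x : A}
    (hx : ‖x‖ ≤ 1) : Summable fun n ↦ ‖binomHalf n • (-x) ^ n‖ :=
  (summable_nat_add_iff 1).mp <| summable_abs_binomHalf_succ.of_nonneg_of_le
    (fun _ ↦ norm_nonneg _) (norm_binomHalf_succ_smul_pow_le hx)

section SqrtOneSub

variable {A : Type*} [NormedRing A] [NormedAlgebra ℂ A] [CompleteSpace A] {x : A}

lemma sqrtOneSub_mul_self (hx : ‖x‖ ≤ 1) : sqrtOneSub x * sqrtOneSub x = 1 - x := by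
  have hsum := summable_norm_binomHalf_smul_pow hx
  have hcoeff (n : ℕ) : ∑ ij ∈ antidiagonal n,
      (binomHalf ij.1 • (-x) ^ ij.1) * (binomHalf ij.2 • (-x) ^ ij.2) =
        (Nat.choose 1 n : ℝ) • (-x) ^ n := by
    rw [← sum_antidiagonal_binomHalf_mul, sum_smul]
    refine sum_congr rfl fun ij hij ↦ ?_
    rw [smul_mul_smul_comm, ← pow_add, mem_antidiagonal.mp hij]
  rw [sqrtOneSub, tsum_mul_tsum_eq_tsum_sum_antidiagonal_of_summable_norm hsum hsum,
    tsum_congr hcoeff, tsum_eq_sum (s := range 2) fun n hn ↦ ?_]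
  · simp [sum_range_succ, sub_eq_add_neg]
  · rw [Nat.choose_eq_zero_of_lt (by simp at hn; omega), Nat.cast_zero, zero_smul]

lemma norm_sqrtOneSub_sub_one_le (hx : ‖x‖ ≤ 1) : ‖sqrtOneSub x - 1‖ ≤ 1 := by
  have hsum := summable_norm_binomHalf_smul_pow hx
  have htail := (summable_nat_add_iff 1).mpr hsum
  rw [sqrtOneSub, hsum.of_norm.tsum_eq_zero_add, pow_zero,
    show binomHalf 0 = 1 by simp [binomHalf], one_smul, add_sub_cancel_left]
  calc ‖∑' n, binomHalf (n + 1) • (-x) ^ (n + 1)‖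
      ≤ ∑' n, ‖binomHalf (n + 1) • (-x) ^ (n + 1)‖ := norm_tsum_le_tsum_norm htail
    _ ≤ ∑' n, |binomHalf (n + 1)| :=
      htail.tsum_le_tsum (norm_binomHalf_succ_smul_pow_le hx) summable_abs_binomHalf_succ
    _ ≤ 1 := tsum_abs_binomHalf_succ_le_one

lemma Commute.sqrtOneSub_right {y : A} (hx : ‖x‖ ≤ 1) (h : Commute y x) :
    Commute y (sqrtOneSub x) := by
  have hsum := (summable_norm_binomHalf_smul_pow hx).of_norm
  rw [Commute, SemiconjBy, sqrtOneSub, ← hsum.tsum_mul_left, ← hsum.tsum_mul_right]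
  exact tsum_congr fun n ↦ ((h.neg_right.pow_right n).smul_right (binomHalf n)).eq

end SqrtOneSub

lemma norm_pow_le_max_one_norm_one {R : Type*} [NormedRing R] {a : R} (ha : ‖a‖ ≤ 1) (k : ℕ) :
    ‖a ^ k‖ ≤ max 1 ‖(1 : R)‖ := by
  rcases k with _ | k
  · simp
  · exact (norm_pow_le' a k.succ_pos).trans ((pow_le_one₀ (norm_nonneg a) ha).trans
      (le_max_left _ _))

lemma norm_add_pow_le_of_commute {R : Type*} [NormedRing R] {a b : R} (hab : Commute a b)
    {Ka Kb α β : ℝ} (ha : ∀ k, ‖a ^ k‖ ≤ Ka * α ^ k) (hb : ∀ k, ‖b ^ k‖ ≤ Kb * β ^ k) (n : ℕ) :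
    ‖(a + b) ^ n‖ ≤ Ka * Kb * (α + β) ^ n := by
  rw [hab.add_pow, add_pow, mul_sum]
  refine (norm_sum_le _ _).trans (sum_le_sum fun k _ ↦ ?_)
  rw [← Nat.cast_comm, ← nsmul_eq_mul]
  calc ‖n.choose k • (a ^ k * b ^ (n - k))‖
      ≤ n.choose k * (‖a ^ k‖ * ‖b ^ (n - k)‖) :=
        norm_nsmul_le.trans (by gcongr; exact norm_mul_le _ _)
    _ ≤ n.choose k * ((Ka * α ^ k) * (Kb * β ^ (n - k))) := by
      gcongr
      · exact (norm_nonneg _).trans (ha k)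
      · exact ha k
      · exact hb _
    _ = Ka * Kb * (α ^ k * β ^ (n - k) * n.choose k) := by ring

lemma eq_zero_of_mul_eq_self_of_tendsto_pow {R : Type*} [MonoidWithZero R] [TopologicalSpace R]
    [ContinuousMul R] [T2Space R] {u w : R} (h : u * w = u)
    (hw : Tendsto (fun n ↦ w ^ n) atTop (𝓝 0)) : u = 0 := by
  have hpow (n : ℕ) : u * w ^ n = u := by
    induction n with
    | zero => simp
    | succ n ih => rw [pow_succ, ← mul_assoc, ih, h]
  have hlim := hw.const_mul u
  simp only [hpow, mul_zero] at hlim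
  exact tendsto_nhds_unique tendsto_const_nhds hlim

section BanachAlgebra

variable {A : Type*} [NormedRing A] [NormedAlgebra ℂ A] [CompleteSpace A]

lemma exists_norm_pow_le_mul_pow_of_spectralRadius_lt {a : A} {r : ℝ≥0}
    (h : spectralRadius ℂ a < r) : ∃ K, ∀ n, ‖a ^ n‖ ≤ K * r ^ n := by
  have hr : 0 < r := ENNReal.coe_pos.mp (pos_of_gt h)
  have hev : ∀ᶠ n : ℕ in atTop, ‖a ^ n‖ ≤ 1 * ‖(r : ℝ) ^ n‖ := by
    have hgelfand := spectrum.pow_nnnorm_pow_one_div_tendsto_nhds_spectralRadius a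
    filter_upwards [hgelfand.eventually_lt_const h, eventually_ge_atTop 1] with n hn hn1
    rw [one_div, ENNReal.rpow_inv_lt_iff (by positivity), ENNReal.rpow_natCast,
      ← ENNReal.coe_pow, ENNReal.coe_lt_coe, ← NNReal.coe_lt_coe, coe_nnnorm] at hn
    simpa using hn.le
  exact (isBigO_nat_atTop_iff fun n hn ↦ absurd hn (by positivity)).mp
    (IsBigO.of_bound 1 hev) |>.imp fun K hK n ↦ by simpa using hK n

lemma eq_of_mul_self_eq_of_commute {s y : A} (hsy : Commute s y) (hsq : s * s = y * y)
    (hs : ‖s - 1‖ ≤ 1) (hy : spectralRadius ℂ (y - 1) < 1) : s = y := by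
  obtain ⟨r, hyr, hr1⟩ := ENNReal.lt_iff_exists_nnreal_btwn.mp hy
  obtain ⟨K, hK⟩ := exists_norm_pow_le_mul_pow_of_spectralRadius_lt hyr
  set w : A := (-(1 / 2) : ℝ) • ((s - 1) + (y - 1))
  have hw (n : ℕ) : ‖w ^ n‖ ≤ max 1 ‖(1 : A)‖ * K * ((1 + r) / 2) ^ n := by
    rw [smul_pow, norm_smul, norm_pow, norm_neg, Real.norm_of_nonneg (by norm_num)]
    have hcomm : Commute (s - 1) (y - 1) :=
      (hsy.sub_left (Commute.one_left y)).sub_right (Commute.one_right _)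
    have hbinom := norm_add_pow_le_of_commute hcomm (Ka := max 1 ‖(1 : A)‖) (α := 1)
      (by simpa using norm_pow_le_max_one_norm_one hs) hK n
    calc (1 / 2) ^ n * ‖(s - 1 + (y - 1)) ^ n‖
        ≤ (1 / 2) ^ n * (max 1 ‖(1 : A)‖ * K * (1 + r) ^ n) := by gcongr
      _ = max 1 ‖(1 : A)‖ * K * ((1 + r) / 2) ^ n := by
        rw [div_eq_mul_one_div (1 + (r : ℝ)) 2, mul_pow]; ring
  have hw0 : Tendsto (fun n ↦ w ^ n) atTop (𝓝 0) := by
    refine squeeze_zero_norm hw ?_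
    simpa using (tendsto_pow_atTop_nhds_zero_of_lt_one (by positivity)
      (by linarith [NNReal.coe_lt_one.mpr (ENNReal.coe_lt_one_iff.mp hr1)])).const_mul
      (max 1 ‖(1 : A)‖ * K)
  refine sub_eq_zero.mp (eq_zero_of_mul_eq_self_of_tendsto_pow ?_ hw0)
  have hprod : (s - y) * ((s - 1) + (y - 1)) =
      (s * s - y * y) + (s * y - y * s) - (s - y) - (s - y) := by
    noncomm_ring
  rw [mul_smul_comm, hprod, hsq, hsy.eq, sub_self, sub_self]
  module

end BanachAlgebra

lemma IsCosineFunction.mul_self_half {A : Type*} [NormedRing A] [Algebra ℝ A] {C : ℝ → A}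
    (hC : IsCosineFunction C) (t : ℝ) : C (t / 2) * C (t / 2) = 1 - (1 / 2 : ℝ) • (1 - C t) := by
  have hdouble := hC.2 (t / 2) (t / 2)
  rw [add_halves, sub_self, hC.1, two_mul, add_mul] at hdouble
  rw [eq_sub_of_add_eq hdouble]
  module

theorem half_formula {A : Type*} [NormedRing A] [NormedAlgebra ℂ A]
    [CompleteSpace A] (C : ℝ → A) (hC : IsCosineFunction C) (t : ℝ)
    (h1 : ‖C t - 1‖ ≤ 2)
    (h2 : spectralRadius ℂ (C (t / 2) - 1) < 1) :
    C (t / 2) = sqrtOneSub (((1 : ℝ) / 2) • (1 - C t)) := by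
  set x : A := ((1 : ℝ) / 2) • (1 - C t)
  have hx : ‖x‖ ≤ 1 := by
    rw [norm_smul, norm_sub_rev, Real.norm_of_nonneg (by norm_num)]
    linarith
  have hsq : C (t / 2) * C (t / 2) = 1 - x := hC.mul_self_half t
  have hcomm : Commute (C (t / 2)) x := by
    rw [← sub_sub_cancel 1 x, ← hsq]
    exact (Commute.one_right _).sub_right ((Commute.refl _).mul_right (Commute.refl _))
  refine (eq_of_mul_self_eq_of_commute (hcomm.sqrtOneSub_right hx).symm ?_
    (norm_sqrtOneSub_sub_one_le hx) h2).symm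
  rw [sqrtOneSub_mul_self hx, hsq]
end

section
/- Let z ∈ ℂ. If sup_{n ≥ 1} |cos(n z)| < ∞, then Im(z) = 0, i.e. z is real; consequently cos(z) ∈ [−1, 1]. -/
/-!
For `w = x + iy` the two exponentials in `2 cos w = e^{iw} + e^{-iw}` have moduli `e^{-y}` and
`e^{y}`, so the reverse triangle inequality gives `‖cos w‖ ≥ sinh |Im w|`. Since
`Im (n z) = n Im z` and `sinh t ≥ t` for `t ≥ 0`, boundedness of `cos (n z)` forces
`n |Im z|` to stay bounded, hence `Im z = 0`; then `cos z = cos (Re z)` is a real cosine.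
-/

namespace Complex

theorem sinh_abs_im_le_norm_cos (w : ℂ) : Real.sinh |w.im| ≤ ‖cos w‖ := by
  have hexp : ‖exp (w * I)‖ - ‖exp (-w * I)‖ = -(2 * Real.sinh w.im) := by
    simp only [norm_exp, mul_re, neg_re, neg_im, I_re, I_im, Real.sinh_eq]
    ring_nf
  calc Real.sinh |w.im| = |‖exp (w * I)‖ - ‖-exp (-w * I)‖| / 2 := by
        rw [norm_neg, hexp, abs_neg, abs_mul, ← Real.abs_sinh]; norm_num
    _ ≤ ‖exp (w * I) - -exp (-w * I)‖ / 2 := by gcongr; exact abs_norm_sub_norm_le _ _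
    _ = ‖cos w‖ := by rw [sub_neg_eq_add, cos, norm_div]; norm_num

end Complex

/-- If the values `cos (n z)`, `n ≥ 1`, are bounded, then `z` is real, and
consequently `cos z` lies in the real interval `[-1, 1]`. -/
theorem bounded_cos_multiples_real (z : ℂ)
    (h : ∃ M : ℝ, ∀ n : ℕ, 1 ≤ n → ‖Complex.cos (n * z)‖ ≤ M) :
    z.im = 0 ∧ ∃ r ∈ Set.Icc (-1 : ℝ) 1, Complex.cos z = (r : ℂ) := by
  obtain ⟨M, hM⟩ := h
  have hlinear (n : ℕ) (hn : 1 ≤ n) : n * |z.im| ≤ M := calc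
    n * |z.im| ≤ Real.sinh (n * |z.im|) := Real.self_le_sinh_iff.mpr (by positivity)
    _ = Real.sinh |((n : ℂ) * z).im| := by simp [abs_mul]
    _ ≤ M := (Complex.sinh_abs_im_le_norm_cos _).trans (hM n hn)
  have him : z.im = 0 := by
    by_contra hne
    obtain ⟨n, hn⟩ := exists_nat_gt (max 1 (M / |z.im|))
    have hn1 : 1 ≤ n := by exact_mod_cast (le_max_left _ _).trans hn.le
    have : M < n * |z.im| := (div_lt_iff₀ (abs_pos.mpr hne)).mp ((le_max_right _ _).trans_lt hn)
    linarith [hlinear n hn1]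
  have hz : z = (z.re : ℂ) := Complex.ext rfl (by simp [him])
  exact ⟨him, Real.cos z.re, ⟨Real.neg_one_le_cos _, Real.cos_le_one _⟩,
    by rw [hz, ← Complex.ofReal_cos, Complex.ofReal_re]⟩
end

section
/- Let A be a complex unital Banach algebra, let (C(t))_{t∈ℝ} be a cosine function in A, and suppose η > 0 is such that for every t with |t| ≤ η one has ‖C(t) − 1_A‖ ≤ 2 and ρ(C(t/2) − 1_A) < 1, where ρ denotes the spectral radius. Then for every t with |t| ≤ η, ‖C(t/2) − 1_A‖ ≤ 1 − √(1 − ‖C(t) − 1_A‖/2), where √ denotes the nonnegative real square root. -/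
open Filter Topology
open scoped ENNReal NNReal

/-!
Put `a = C (t / 2)`. The duplication formula gives `C t - 1 = 2 (a² - 1)`, so `a` is a square
root of `1 - 4w` with `w = (1 - a²) / 4` and `‖w‖ ≤ 1/4`. The series
`s(w) = ∑ catalan k • w ^ (k + 1)` (that is, `w` times the Catalan generating function) converges
absolutely for `‖w‖ ≤ 1/4` and satisfies `s² = s - w`, so `1 - 2 s(w)` is a square root of
`1 - 4w` as well, at distance at most `2 s(‖w‖) = 1 - √(1 - 4‖w‖)` from `1`. In the closed
commutative subalgebra generated by `a`, the two roots differ by a factor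
`a + 1 - 2 s(w)` that no character kills, because `|φ (a - 1)| < 1` and `|2 φ (s(w))| ≤ 1`;
hence `a = 1 - 2 s(w)`.
-/

open Finset

lemma sum_range_catalan_div_four_pow (N : ℕ) :
    ∑ k ∈ range N, (catalan k : ℝ) / 4 ^ k = 2 - 2 * N.centralBinom / 4 ^ N := by
  induction N with
  | zero => norm_num
  | succ N ih =>
    have hcat : ((N + 1 : ℕ) : ℝ) * catalan N = N.centralBinom := by
      exact_mod_cast succ_mul_catalan_eq_centralBinom N
    have hbinom : ((N + 1 : ℕ) : ℝ) * (N + 1).centralBinom = 2 * (2 * N + 1) * N.centralBinom := by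
      exact_mod_cast Nat.succ_mul_centralBinom_succ N
    have hN : ((N + 1 : ℕ) : ℝ) ≠ 0 := by positivity
    have : (catalan N : ℝ) = 2 * N.centralBinom - (N + 1).centralBinom / 2 := by
      apply mul_left_cancel₀ hN
      push_cast at hcat hbinom ⊢
      linear_combination hcat + hbinom / 2
    rw [sum_range_succ, ih, this, pow_succ]
    field_simp
    ring

lemma sum_range_catalan_div_four_pow_le (N : ℕ) :
    ∑ k ∈ range N, (catalan k : ℝ) / 4 ^ k ≤ 2 := by
  rw [sum_range_catalan_div_four_pow]
  have : (0 : ℝ) ≤ 2 * N.centralBinom / 4 ^ N := by positivity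
  linarith

section CatalanSum

variable {R : Type*} [NormedRing R]

noncomputable def catalanSum (w : R) : R := ∑' k, catalan k • w ^ (k + 1)

lemma catalan_mul_pow_le {r : ℝ} (hr₀ : 0 ≤ r) (hr : r ≤ 1 / 4) (k : ℕ) :
    (catalan k : ℝ) * r ^ (k + 1) ≤ 4⁻¹ * ((catalan k : ℝ) / 4 ^ k) :=
  calc (catalan k : ℝ) * r ^ (k + 1) ≤ catalan k * (1 / 4) ^ (k + 1) := by gcongr
    _ = 4⁻¹ * ((catalan k : ℝ) / 4 ^ k) := by rw [div_pow, one_pow, pow_succ]; field_simp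

lemma summable_catalan_div_four_pow : Summable fun k ↦ (catalan k : ℝ) / 4 ^ k :=
  summable_of_sum_range_le (fun _ ↦ by positivity) sum_range_catalan_div_four_pow_le

lemma summable_catalan_mul_pow {r : ℝ} (hr₀ : 0 ≤ r) (hr : r ≤ 1 / 4) :
    Summable fun k ↦ (catalan k : ℝ) * r ^ (k + 1) :=
  .of_nonneg_of_le (fun _ ↦ by positivity) (catalan_mul_pow_le hr₀ hr)
    (summable_catalan_div_four_pow.mul_left _)

lemma catalanSum_le_half {r : ℝ} (hr₀ : 0 ≤ r) (hr : r ≤ 1 / 4) : catalanSum r ≤ 1 / 2 :=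
  calc catalanSum r = ∑' k, (catalan k : ℝ) * r ^ (k + 1) := by
        simp only [catalanSum, nsmul_eq_mul]
    _ ≤ ∑' k, 4⁻¹ * ((catalan k : ℝ) / 4 ^ k) :=
        (summable_catalan_mul_pow hr₀ hr).tsum_le_tsum (catalan_mul_pow_le hr₀ hr)
          (summable_catalan_div_four_pow.mul_left _)
    _ ≤ 4⁻¹ * 2 := by
        rw [tsum_mul_left]
        gcongr
        exact Real.tsum_le_of_sum_range_le (fun _ ↦ by positivity)
          sum_range_catalan_div_four_pow_le
    _ = 1 / 2 := by norm_num

lemma norm_catalan_nsmul_pow_le (w : R) (k : ℕ) :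
    ‖catalan k • w ^ (k + 1)‖ ≤ catalan k * ‖w‖ ^ (k + 1) :=
  norm_nsmul_le.trans (by gcongr; exact norm_pow_le' w k.succ_pos)

lemma summable_norm_catalan_nsmul_pow {w : R} (hw : ‖w‖ ≤ 1 / 4) :
    Summable fun k ↦ ‖catalan k • w ^ (k + 1)‖ :=
  .of_nonneg_of_le (fun _ ↦ norm_nonneg _) (norm_catalan_nsmul_pow_le w)
    (summable_catalan_mul_pow (norm_nonneg w) hw)

lemma norm_catalanSum_le {w : R} (hw : ‖w‖ ≤ 1 / 4) : ‖catalanSum w‖ ≤ catalanSum ‖w‖ :=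
  calc ‖catalanSum w‖ ≤ ∑' k, ‖catalan k • w ^ (k + 1)‖ :=
        norm_tsum_le_tsum_norm (summable_norm_catalan_nsmul_pow hw)
    _ ≤ ∑' k, (catalan k : ℝ) * ‖w‖ ^ (k + 1) :=
        (summable_norm_catalan_nsmul_pow hw).tsum_le_tsum (norm_catalan_nsmul_pow_le w)
          (summable_catalan_mul_pow (norm_nonneg w) hw)
    _ = catalanSum ‖w‖ := by simp only [catalanSum, nsmul_eq_mul]

lemma catalanSum_mul_self [CompleteSpace R] {w : R} (hw : ‖w‖ ≤ 1 / 4) :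
    catalanSum w * catalanSum w = catalanSum w - w := by
  have hnorm := summable_norm_catalan_nsmul_pow hw
  have hcauchy (n : ℕ) : ∑ ij ∈ antidiagonal n,
      catalan ij.1 • w ^ (ij.1 + 1) * catalan ij.2 • w ^ (ij.2 + 1)
        = catalan (n + 1) • w ^ (n + 1 + 1) := by
    rw [catalan_succ', sum_smul]
    refine sum_congr rfl fun ij hij ↦ ?_
    rw [HasAntidiagonal.mem_antidiagonal] at hij
    rw [smul_mul_smul_comm, ← pow_add, ← hij]
    ring_nf
  rw [catalanSum, tsum_mul_tsum_eq_tsum_sum_antidiagonal_of_summable_norm hnorm hnorm,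
    hnorm.of_norm.tsum_eq_zero_add]
  simp only [hcauchy, catalan_zero, one_smul, zero_add, pow_one]
  abel

lemma two_mul_catalanSum_eq_one_sub_sqrt {r : ℝ} (hr₀ : 0 ≤ r) (hr : r ≤ 1 / 4) :
    2 * catalanSum r = 1 - √(1 - 4 * r) := by
  have hsq := catalanSum_mul_self (w := r) (by rwa [Real.norm_of_nonneg hr₀])
  have hsqrt : √(1 - 4 * r) = 1 - 2 * catalanSum r := by
    rw [show 1 - 4 * r = (1 - 2 * catalanSum r) ^ 2 by linear_combination (-4) * hsq]
    exact Real.sqrt_sq (by linarith [catalanSum_le_half hr₀ hr])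
  linarith

lemma norm_two_mul_catalanSum_le {w : R} (hw : ‖w‖ ≤ 1 / 4) :
    ‖2 * catalanSum w‖ ≤ 1 - √(1 - 4 * ‖w‖) :=
  calc ‖2 * catalanSum w‖ ≤ ‖catalanSum w‖ + ‖catalanSum w‖ := by
        rw [two_mul]; exact norm_add_le _ _
    _ ≤ 2 * catalanSum ‖w‖ := by linarith [norm_catalanSum_le hw]
    _ = 1 - √(1 - 4 * ‖w‖) := two_mul_catalanSum_eq_one_sub_sqrt (norm_nonneg w) hw

end CatalanSum

section SpectralRadius

variable {A : Type*} [NormedRing A] [NormedAlgebra ℂ A]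

lemma nnnorm_le_spectralRadius_of_mem {a : A} {k : ℂ} (hk : k ∈ spectrum ℂ a) :
    (‖k‖₊ : ℝ≥0∞) ≤ spectralRadius ℂ a :=
  le_iSup₂ (f := fun k (_ : k ∈ spectrum ℂ a) ↦ (‖k‖₊ : ℝ≥0∞)) k hk

variable [CompleteSpace A]

/-- `spectrum.spectralRadius_le_nnnorm` without `NormOneClass`. -/
lemma spectralRadius_le_nnnorm' (a : A) : spectralRadius ℂ a ≤ ‖a‖₊ := by
  refine le_of_tendsto (spectrum.gelfand_formula a) ?_
  filter_upwards [eventually_ne_atTop 0] with n hn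
  calc (‖a ^ n‖₊ : ℝ≥0∞) ^ (1 / n : ℝ) ≤ ((‖a‖₊ : ℝ≥0∞) ^ n) ^ (1 / n : ℝ) := by
        gcongr
        exact_mod_cast nnnorm_pow_le' a (Nat.pos_of_ne_zero hn)
    _ = ‖a‖₊ := by rw [one_div, ENNReal.pow_rpow_inv_natCast hn]

lemma spectralRadius_eq_of_nnnorm_pow_eq {B : Type*} [NormedRing B] [NormedAlgebra ℂ B]
    [CompleteSpace B] {a : A} {b : B} (h : ∀ n : ℕ, ‖a ^ n‖₊ = ‖b ^ n‖₊) :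
    spectralRadius ℂ a = spectralRadius ℂ b :=
  tendsto_nhds_unique (spectrum.gelfand_formula a)
    (by simpa only [h] using spectrum.gelfand_formula b)

end SpectralRadius

section Commutative

variable {B : Type*} [NormedCommRing B] [NormedAlgebra ℂ B] [CompleteSpace B]

lemma isUnit_two_add_sub {a b : B} (ha : spectralRadius ℂ a < 1) (hb : ‖b‖ ≤ 1) :
    IsUnit (2 + a - b) := by
  by_contra h
  obtain ⟨φ, hφ⟩ := WeakDual.CharacterSpace.exists_apply_eq_zero h
  have hφa : ‖φ a‖ < 1 := by
    have := (nnnorm_le_spectralRadius_of_mem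
      (WeakDual.CharacterSpace.apply_mem_spectrum φ a)).trans_lt ha
    exact_mod_cast this
  have hφb : ‖φ b‖ ≤ ‖b‖ := by
    have := (nnnorm_le_spectralRadius_of_mem
      (WeakDual.CharacterSpace.apply_mem_spectrum φ b)).trans (spectralRadius_le_nnnorm' b)
    exact_mod_cast this
  rw [map_sub, map_add, map_ofNat, sub_eq_zero] at hφ
  have h2 : (2 : ℂ) = φ b - φ a := by rw [← hφ]; ring
  have := norm_sub_le (φ b) (φ a)
  rw [← h2, Complex.norm_ofNat] at this
  linarith

lemma eq_one_sub_two_mul_catalanSum_of_sq_eq {a w : B} (ha : spectralRadius ℂ (a - 1) < 1)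
    (hw : ‖w‖ ≤ 1 / 4) (h : a ^ 2 = 1 - 4 * w) : a = 1 - 2 * catalanSum w := by
  have hfactor : (a - (1 - 2 * catalanSum w)) * (2 + (a - 1) - 2 * catalanSum w) = 0 := by
    linear_combination h - 4 * catalanSum_mul_self hw
  have hunit := isUnit_two_add_sub ha
    ((norm_two_mul_catalanSum_le hw).trans (by linarith [Real.sqrt_nonneg (1 - 4 * ‖w‖)]))
  exact sub_eq_zero.mp (hunit.mul_left_eq_zero.mp hfactor)

end Commutative

noncomputable instance Algebra.elemental.instNormedCommRing {R A : Type*} [CommRing R]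
    [NormedRing A] [Algebra R A] (a : A) : NormedCommRing (Algebra.elemental R a) :=
  { (Algebra.elemental R a).normedRing with mul_comm := mul_comm }

lemma norm_sub_one_le_one_sub_sqrt {A : Type*} [NormedRing A] [NormedAlgebra ℂ A]
    [CompleteSpace A] {a : A} (ha : spectralRadius ℂ (a - 1) < 1) (h : ‖a ^ 2 - 1‖ ≤ 1) :
    ‖a - 1‖ ≤ 1 - √(1 - ‖a ^ 2 - 1‖) := by
  let a' : Algebra.elemental ℂ a := ⟨a, Algebra.elemental.self_mem ℂ a⟩
  have ha' : spectralRadius ℂ (a' - 1) < 1 :=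
    (spectralRadius_eq_of_nnnorm_pow_eq (a := a - 1) (b := a' - 1) fun _ ↦ rfl).symm.trans_lt ha
  let w : Algebra.elemental ℂ a := (4 : ℂ)⁻¹ • (1 - a' ^ 2)
  have hw : ‖w‖ = ‖a ^ 2 - 1‖ / 4 := by
    rw [norm_smul, norm_inv, Complex.norm_ofNat, norm_sub_rev 1, inv_mul_eq_div]
    rfl
  have hsq : a' ^ 2 = 1 - 4 * w := by
    have h4 : (4 : Algebra.elemental ℂ a) = algebraMap ℂ _ 4 := (map_ofNat _ 4).symm
    rw [mul_smul_comm, h4, ← Algebra.smul_def, smul_smul]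
    norm_num
  have hroot := eq_one_sub_two_mul_catalanSum_of_sq_eq ha' (by rw [hw]; linarith) hsq
  calc ‖a - 1‖ = ‖a' - 1‖ := rfl
    _ = ‖2 * catalanSum w‖ := by rw [hroot, sub_sub_cancel_left, norm_neg]
    _ ≤ 1 - √(1 - 4 * ‖w‖) := norm_two_mul_catalanSum_le (by rw [hw]; linarith)
    _ = 1 - √(1 - ‖a ^ 2 - 1‖) := by rw [hw]; ring_nf

lemma IsCosineFunction.norm_sub_one_eq_two_mul {A : Type*} [NormedRing A] [NormedAlgebra ℂ A]
    {C : ℝ → A} (hC : IsCosineFunction C) (t : ℝ) :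
    ‖C t - 1‖ = 2 * ‖C (t / 2) ^ 2 - 1‖ := by
  have hdouble := hC.2 (t / 2) (t / 2)
  rw [add_halves, sub_self, hC.1] at hdouble
  have : C t - 1 = (2 : ℂ) • (C (t / 2) ^ 2 - 1) := by
    rw [two_smul, eq_sub_of_add_eq hdouble]
    noncomm_ring
  rw [this, norm_smul, Complex.norm_ofNat]

theorem half_norm_estimate_general {A : Type*} [NormedRing A] [NormedAlgebra ℂ A]
    [CompleteSpace A] (C : ℝ → A) (hC : IsCosineFunction C) (η : ℝ)
    (h : ∀ t : ℝ, |t| ≤ η →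
      ‖C t - 1‖ ≤ 2 ∧ spectralRadius ℂ (C (t / 2) - 1) < 1) :
    ∀ t : ℝ, |t| ≤ η →
      ‖C (t / 2) - 1‖ ≤ 1 - Real.sqrt (1 - ‖C t - 1‖ / 2) := by
  intro t ht
  obtain ⟨hnorm, hρ⟩ := h t ht
  rw [hC.norm_sub_one_eq_two_mul t] at hnorm ⊢
  rw [mul_div_cancel_left₀ _ two_ne_zero]
  exact norm_sub_one_le_one_sub_sqrt hρ (by linarith)

theorem half_norm_estimate {A : Type*} [NormedRing A] [NormedAlgebra ℂ A]
    [CompleteSpace A] (C : ℝ → A) (hC : IsCosineFunction C) (η : ℝ)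
    (hη : 0 < η)
    (h : ∀ t : ℝ, |t| ≤ η →
      ‖C t - 1‖ ≤ 2 ∧ spectralRadius ℂ (C (t / 2) - 1) < 1) :
    ∀ t : ℝ, |t| ≤ η →
      ‖C (t / 2) - 1‖ ≤ 1 - Real.sqrt (1 - ‖C t - 1‖ / 2) :=
  half_norm_estimate_general C hC η h
end
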